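/- Let G be a finite solvable group with trivial center such that every prime dividing |G| divides |Fit(G)| and such that Γ(G) is connected. Then the diameter of Γ(G) is at most 5. -/

import Mathlib

/-- The nilpotent neighborhood of `x`: elements `y` such that `⟨x,y⟩` is nilpotent. -/
def nilNbhd {G : Type*} [Group G] (x : G) : Set G :=
  {y | Group.IsNilpotent ↥(Subgroup.closure ({x, y} : Set G))}

/-- The hypercenter of a finite group: the stable term of the upper central series. -/
noncomputable def hypercenter (G : Type*) [Group G] : Subgroup G :=
  upperCentralSeries G (Nat.card G)

instance hypercenter_normal (G : Type*) [Group G] : (hypercenter G).Normal :=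
  inferInstanceAs (Subgroup.upperCentralSeries G (Nat.card G)).Normal

/-- The graph Γ(G): induced subgraph of the nilpotent graph on `G \ Z_∞(G)`. -/
def nilGraph (G : Type*) [Group G] : SimpleGraph {x : G // x ∉ hypercenter G} where
  Adj a b := a ≠ b ∧ Group.IsNilpotent ↥(Subgroup.closure ({a.1, b.1} : Set G))
  symm := ⟨fun a b ⟨h1, h2⟩ => ⟨h1.symm, by rwa [Set.pair_comm]⟩⟩
  loopless := ⟨fun a h => h.1 rfl⟩

/-- The commuting graph on the non-central elements. -/
def commGraph (G : Type*) [Group G] : SimpleGraph {x : G // x ∉ Subgroup.center G} where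
  Adj a b := a ≠ b ∧ a.1 * b.1 = b.1 * a.1
  symm := ⟨fun a b ⟨h1, h2⟩ => ⟨h1.symm, h2.symm⟩⟩
  loopless := ⟨fun a h => h.1 rfl⟩

/-- Diameter of a connected component: diameter of the induced subgraph on its support. -/
noncomputable def compDiam {V : Type*} (Γ : SimpleGraph V) (c : Γ.ConnectedComponent) : ℕ :=
  (Γ.induce c.supp).diam

/-- `H` is a Frobenius complement in `G`. -/
def IsFrobeniusComplement {G : Type*} [Group G] (H : Subgroup G) : Prop :=
  H ≠ ⊥ ∧ H ≠ ⊤ ∧ ∀ g : G, g ∉ H → H ⊓ H.map (MulAut.conj g).toMonoidHom = ⊥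

/-- `G` is a Frobenius group. -/
def IsFrobenius (G : Type*) [Group G] : Prop :=
  ∃ H : Subgroup G, IsFrobeniusComplement H

/-- `K` is the Frobenius kernel corresponding to the complement `H`. -/
def IsFrobeniusKernelOf {G : Type*} [Group G] (K H : Subgroup G) : Prop :=
  IsFrobeniusComplement H ∧
    (K : Set G) = {1} ∪ {x : G | ∀ g : G, x ∉ H.map (MulAut.conj g).toMonoidHom}

/-- `K` is a Frobenius kernel of `G`. -/
def IsFrobeniusKernel {G : Type*} [Group G] (K : Subgroup G) : Prop :=
  ∃ H : Subgroup G, IsFrobeniusKernelOf K H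

/-- `G` is a 2-Frobenius group. -/
def IsTwoFrobenius (G : Type*) [Group G] : Prop :=
  ∃ K L : Subgroup G, ∃ hK : K.Normal, L.Normal ∧ K ≤ L ∧
    IsFrobeniusKernel (K.subgroupOf L) ∧
    (haveI := hK; IsFrobeniusKernel (Subgroup.map (QuotientGroup.mk' K) L))

/-- The Fitting subgroup: the largest normal nilpotent subgroup (of a finite group). -/
def fitting (G : Type*) [Group G] : Subgroup G :=
  sSup {H : Subgroup G | H.Normal ∧ Group.IsNilpotent ↥H}

/-!
Since `Z(G) = 1`, the hypercenter is trivial and the vertices of `Γ(G)` are the nontrivial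
elements. A nontrivial `x` has a power `a` of some prime order `p`. As `p` divides `|Fit(G)|`,
some normal nilpotent subgroup has order divisible by `p`, and its Sylow `p`-subgroup is a
nontrivial normal `p`-subgroup `T` of `G`; then `x — a — z` for any `1 ≠ z ∈ T`, because
`⟨a⟩T` is a `p`-group. Finally, an element of a normal `p`-subgroup and one of a normal
`q`-subgroup generate a nilpotent group: for `p = q` they lie in a common `p`-group, and for
`p ≠ q` they commute. Hence any two vertices are joined by a path `x — a — z — w — b — y`.
-/

open Subgroup SimpleGraph

section

variable {G : Type*} [Group G]

lemma upperCentralSeries_eq_bot_of_center_eq_bot (hZ : center G = ⊥) (n : ℕ) :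
    Subgroup.upperCentralSeries G n = ⊥ := by
  induction n with
  | zero => rfl
  | succ n ih =>
    calc Subgroup.upperCentralSeries G (n + 1) = Subgroup.upperCentralSeries G (0 + 1) := by
          ext x
          simp only [Subgroup.mem_upperCentralSeries_succ_iff, ih, Subgroup.upperCentralSeries_zero]
      _ = ⊥ := (Subgroup.upperCentralSeries_one G).trans hZ

lemma hypercenter_eq_bot_of_center_eq_bot (hZ : center G = ⊥) : hypercenter G = ⊥ :=
  upperCentralSeries_eq_bot_of_center_eq_bot hZ _

lemma isNilpotent_closure_pair_of_mem {H : Subgroup G} [Group.IsNilpotent H] {a b : G}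
    (ha : a ∈ H) (hb : b ∈ H) : Group.IsNilpotent (closure ({a, b} : Set G)) :=
  (Group.isNilpotent_congr (subgroupOfEquivOfLe (closure_le H |>.mpr (Set.pair_subset ha hb)))).mp
    inferInstance

open scoped IsMulCommutative in
lemma isNilpotent_closure_pair_of_commute {a b : G} (h : Commute a b) :
    Group.IsNilpotent (closure ({a, b} : Set G)) := by
  have : IsMulCommutative (closure ({a, b} : Set G)) := isMulCommutative_closure <| by
    rintro x (rfl | rfl) y (rfl | rfl)
    exacts [rfl, h, h.symm, rfl]
  infer_instance

lemma isNilpotent_closure_pair_of_mem_normal_isPGroup [Finite G] {p q : ℕ} [Fact p.Prime]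
    [Fact q.Prime] {T S : Subgroup G} [T.Normal] [S.Normal] (hT : IsPGroup p T)
    (hS : IsPGroup q S) {z w : G} (hz : z ∈ T) (hw : w ∈ S) :
    Group.IsNilpotent (closure ({z, w} : Set G)) := by
  by_cases hpq : p = q
  · subst hpq
    have := (hT.to_sup_of_normal_right hS).isNilpotent
    exact isNilpotent_closure_pair_of_mem (mem_sup_left hz) (mem_sup_right hw)
  · exact isNilpotent_closure_pair_of_commute <| commute_of_normal_of_disjoint T S ‹_› ‹_›
      (IsPGroup.disjoint_of_ne p q hpq T S hT hS) z w hz hw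

lemma card_sup_dvd_card_mul_card (H K : Subgroup G) [K.Normal] :
    Nat.card (H ⊔ K : Subgroup G) ∣ Nat.card K * Nat.card H := by
  calc Nat.card (H ⊔ K : Subgroup G) = Nat.card K * K.relIndex (H ⊔ K) := by
        simpa only [relIndex_bot_left] using
          (relIndex_mul_relIndex ⊥ K (H ⊔ K) bot_le le_sup_right).symm
    _ = Nat.card K * K.relIndex H := by rw [relIndex_sup_right]
    _ ∣ Nat.card K * Nat.card H := mul_dvd_mul_left _ (relIndex_dvd_card K H)

section Finite

variable [Finite G]

lemma exists_prime_dvd_card_of_prime_dvd_card_sSup {S : Set (Subgroup G)}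
    (hS : ∀ N ∈ S, N.Normal) {p : ℕ} (hp : p.Prime) (h : p ∣ Nat.card (sSup S : Subgroup G)) :
    ∃ N ∈ S, p ∣ Nat.card N := by
  induction S, S.toFinite using Set.Finite.induction_on with
  | empty =>
    rw [sSup_empty, card_bot] at h
    exact absurd (Nat.dvd_one.mp h) hp.ne_one
  | @insert N s _ _ ih =>
    have := hS N (Set.mem_insert N s)
    rw [sSup_insert, sup_comm] at h
    rcases hp.dvd_mul.mp (h.trans (card_sup_dvd_card_mul_card _ N)) with hN | hs
    · exact ⟨N, Set.mem_insert N s, hN⟩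
    · obtain ⟨M, hM, hpM⟩ := ih (fun M hM => hS M (Set.mem_insert_of_mem N hM)) hs
      exact ⟨M, Set.mem_insert_of_mem N hM, hpM⟩

lemma exists_normal_isPGroup_ne_bot_of_prime_dvd_card {N : Subgroup G} [N.Normal]
    [Group.IsNilpotent N] {p : ℕ} [Fact p.Prime] (h : p ∣ Nat.card N) :
    ∃ T : Subgroup G, T.Normal ∧ IsPGroup p T ∧ T ≠ ⊥ := by
  obtain ⟨P⟩ := Sylow.nonempty (p := p) (G := N)
  have := Sylow.characteristic_of_normal P inferInstance
  refine ⟨(P : Subgroup N).map N.subtype, inferInstance, P.isPGroup'.map _, ?_⟩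
  rw [Ne, map_eq_bot_iff_of_injective _ N.subtype_injective]
  exact P.ne_bot_of_dvd_card h

lemma exists_normal_isPGroup_ne_bot_of_prime_dvd_card_fitting {p : ℕ} [hp : Fact p.Prime]
    (h : p ∣ Nat.card (fitting G)) : ∃ T : Subgroup G, T.Normal ∧ IsPGroup p T ∧ T ≠ ⊥ := by
  obtain ⟨N, ⟨_, _⟩, hpN⟩ :=
    exists_prime_dvd_card_of_prime_dvd_card_sSup (fun _ hN => hN.1) hp.out h
  exact exists_normal_isPGroup_ne_bot_of_prime_dvd_card hpN

lemma exists_prime_orderOf_commute {x : G} (hx : x ≠ 1) :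
    ∃ p : ℕ, p.Prime ∧ ∃ a : G, orderOf a = p ∧ Commute x a := by
  have hx0 : orderOf x ≠ 0 := (isOfFinOrder_of_finite x).orderOf_pos.ne'
  refine ⟨(orderOf x).minFac, Nat.minFac_prime (mt orderOf_eq_one_iff.mp hx),
    x ^ (orderOf x / (orderOf x).minFac), orderOf_pow_orderOf_div hx0 (Nat.minFac_dvd _),
    Commute.self_pow x _⟩

end Finite

lemma nilGraph_edist_le_one {u v : {x : G // x ∉ hypercenter G}}
    (h : Group.IsNilpotent (closure ({u.1, v.1} : Set G))) : (nilGraph G).edist u v ≤ 1 := by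
  rw [edist_le_one_iff_adj_or_eq]
  by_cases huv : u = v
  exacts [Or.inr huv, Or.inl ⟨huv, h⟩]

lemma exists_nilGraph_edist_le_two_mem_normal_isPGroup [Finite G] (hhyp : hypercenter G = ⊥)
    (hπ : ∀ p : ℕ, p.Prime → p ∣ Nat.card G → p ∣ Nat.card (fitting G))
    (u : {x : G // x ∉ hypercenter G}) :
    ∃ p : ℕ, p.Prime ∧ ∃ T : Subgroup G, T.Normal ∧ IsPGroup p T ∧
      ∃ v : {x : G // x ∉ hypercenter G}, v.1 ∈ T ∧ (nilGraph G).edist u v ≤ 2 := by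
  have vertex : ∀ {g : G}, g ≠ 1 → g ∉ hypercenter G := fun hg => by rwa [hhyp, mem_bot]
  have hu : u.1 ≠ 1 := fun h => u.2 (h ▸ one_mem _)
  obtain ⟨p, hp, a, hap, hxa⟩ := exists_prime_orderOf_commute hu
  have : Fact p.Prime := ⟨hp⟩
  have ha1 : a ≠ 1 := by
    rintro rfl
    exact hp.ne_one (by rw [← hap, orderOf_one])
  have hpG : p ∣ Nat.card G := hap ▸ orderOf_dvd_natCard a
  obtain ⟨T, hT, hTp, hT1⟩ := exists_normal_isPGroup_ne_bot_of_prime_dvd_card_fitting (hπ p hp hpG)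
  obtain ⟨z, hzT, hz1⟩ := T.bot_or_exists_ne_one.resolve_left hT1
  have hpa : IsPGroup p (zpowers a) := IsPGroup.of_card (by rw [Nat.card_zpowers, hap, pow_one])
  have := (hpa.to_sup_of_normal_right hTp).isNilpotent
  let A : {x : G // x ∉ hypercenter G} := ⟨a, vertex ha1⟩
  let Z : {x : G // x ∉ hypercenter G} := ⟨z, vertex hz1⟩
  refine ⟨p, hp, T, hT, hTp, Z, hzT, ?_⟩
  calc (nilGraph G).edist u Z ≤ (nilGraph G).edist u A + (nilGraph G).edist A Z :=
        SimpleGraph.edist_triangle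
    _ ≤ 1 + 1 := add_le_add (nilGraph_edist_le_one (isNilpotent_closure_pair_of_commute hxa))
        (nilGraph_edist_le_one
          (isNilpotent_closure_pair_of_mem (mem_sup_left (mem_zpowers a)) (mem_sup_right hzT)))
    _ = 2 := rfl

end

theorem stmt_16_general (G : Type*) [Group G] [Finite G]
    (hZ : Subgroup.center G = ⊥)
    (hπ : ∀ p : ℕ, p.Prime → p ∣ Nat.card G → p ∣ Nat.card (fitting G)) :
    (nilGraph G).diam ≤ 5 := by
  have hhyp := hypercenter_eq_bot_of_center_eq_bot hZ
  refine ENat.toNat_le_of_le_natCast (ediam_le_of_edist_le fun u v => ?_)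
  obtain ⟨p, hp, T, hT, hTp, z, hzT, huz⟩ :=
    exists_nilGraph_edist_le_two_mem_normal_isPGroup hhyp hπ u
  obtain ⟨q, hq, S, hS, hSq, w, hwS, hvw⟩ :=
    exists_nilGraph_edist_le_two_mem_normal_isPGroup hhyp hπ v
  have : Fact p.Prime := ⟨hp⟩
  have : Fact q.Prime := ⟨hq⟩
  have hzw := nilGraph_edist_le_one
    (isNilpotent_closure_pair_of_mem_normal_isPGroup hTp hSq hzT hwS)
  calc (nilGraph G).edist u v ≤ (nilGraph G).edist u w + (nilGraph G).edist w v :=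
        SimpleGraph.edist_triangle
    _ ≤ (nilGraph G).edist u z + (nilGraph G).edist z w + (nilGraph G).edist w v := by
        gcongr
        exact SimpleGraph.edist_triangle
    _ ≤ 2 + 1 + 2 := by
        gcongr
        rwa [SimpleGraph.edist_comm]
    _ = 5 := rfl

/-- If every prime dividing |G| divides |Fit(G)| and Γ(G) is connected, diam ≤ 5. -/
theorem stmt_16 (G : Type*) [Group G] [Finite G] (hsolv : IsSolvable G)
    (hZ : Subgroup.center G = ⊥)
    (hπ : ∀ p : ℕ, p.Prime → p ∣ Nat.card G → p ∣ Nat.card (fitting G))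
    (hc : (nilGraph G).Connected) :
    (nilGraph G).diam ≤ 5 :=
  stmt_16_general G hZ hπ
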